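/- There exists a finite nonempty set T of line segment curves in ℝ² such that the segment connecting the centroids of the endpoints is not optimal for the (1,2)-means objective under the Fréchet distance: letting μ_0 be the centroid of {τ(0) : τ ∈ T}, μ_1 the centroid of {τ(1) : τ ∈ T}, and μ_l = seg(μ_0, μ_1), there exist points ν_0, ν_1 ∈ ℝ² with ∑_{τ∈T} d_F(τ, seg(ν_0, ν_1))² < ∑_{τ∈T} d_F(τ, μ_l)². -/
import Mathlib

open scoped Classical

/-- The Fréchet distance between two curves `τ σ : ℝ → ℝ^d` (viewed as curves on `[0,1]`). -/
noncomputable def frechetDist {d : ℕ} (τ σ : ℝ → EuclideanSpace ℝ (Fin d)) : ℝ :=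
  sInf { r : ℝ | ∃ f : ℝ → ℝ, ContinuousOn f (Set.Icc 0 1) ∧
    MonotoneOn f (Set.Icc 0 1) ∧ Set.InjOn f (Set.Icc 0 1) ∧
    Set.MapsTo f (Set.Icc 0 1) (Set.Icc 0 1) ∧ f 0 = 0 ∧ f 1 = 1 ∧
    r = ⨆ t : Set.Icc (0 : ℝ) 1, dist (τ (f (t : ℝ))) (σ (t : ℝ)) }

/-- The line segment curve `t ↦ (1−t)p + tq`. -/
noncomputable def seg {d : ℕ} (p q : EuclideanSpace ℝ (Fin d)) : ℝ → EuclideanSpace ℝ (Fin d) :=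
  fun t => (1 - t) • p + t • q

/-- The centroid `(1/|P|)·∑_{p∈P} p` of a finite set of points. -/
noncomputable def centroid {d : ℕ} (P : Finset (EuclideanSpace ℝ (Fin d))) :
    EuclideanSpace ℝ (Fin d) :=
  (P.card : ℝ)⁻¹ • ∑ p ∈ P, p

section aux

variable {d : ℕ}

lemma seg_zero (p q : EuclideanSpace ℝ (Fin d)) : seg p q 0 = p := by
  simp [seg]

lemma seg_one (p q : EuclideanSpace ℝ (Fin d)) : seg p q 1 = q := by
  simp [seg]

lemma norm_seg_le (p q : EuclideanSpace ℝ (Fin d)) {s : ℝ} (hs : s ∈ Set.Icc (0:ℝ) 1) :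
    ‖seg p q s‖ ≤ ‖p‖ + ‖q‖ := by
  obtain ⟨h0, h1⟩ := hs
  calc ‖seg p q s‖ ≤ ‖(1-s) • p‖ + ‖s • q‖ := norm_add_le _ _
    _ = |1-s| * ‖p‖ + |s| * ‖q‖ := by rw [norm_smul, norm_smul]; rfl
    _ ≤ ‖p‖ + ‖q‖ := by
        have h2 : |1-s| = 1-s := abs_of_nonneg (by linarith)
        have h3 : |s| = s := abs_of_nonneg h0
        nlinarith [norm_nonneg p, norm_nonneg q]

lemma dist_seg_le (p q u v : EuclideanSpace ℝ (Fin d)) {s : ℝ} (hs : s ∈ Set.Icc (0:ℝ) 1) :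
    dist (seg p q s) (seg u v s) ≤ max (dist p u) (dist q v) := by
  obtain ⟨h0, h1⟩ := hs
  have hsub : seg p q s - seg u v s = (1-s) • (p - u) + s • (q - v) := by
    simp only [seg, smul_sub]; abel
  rw [dist_eq_norm, hsub]
  calc ‖(1-s) • (p - u) + s • (q - v)‖
      ≤ ‖(1-s) • (p - u)‖ + ‖s • (q - v)‖ := norm_add_le _ _
    _ = |1-s| * ‖p - u‖ + |s| * ‖q - v‖ := by rw [norm_smul, norm_smul]; rfl
    _ = (1-s) * dist p u + s * dist q v := by
        rw [abs_of_nonneg (by linarith), abs_of_nonneg h0, dist_eq_norm, dist_eq_norm]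
    _ ≤ max (dist p u) (dist q v) := by
        have hpu := le_max_left (dist p u) (dist q v)
        have hqv := le_max_right (dist p u) (dist q v)
        have e1 := mul_le_mul_of_nonneg_left hpu (by linarith : (0:ℝ) ≤ 1 - s)
        have e2 := mul_le_mul_of_nonneg_left hqv h0
        linarith

lemma frechetDist_seg (p q u v : EuclideanSpace ℝ (Fin d)) :
    frechetDist (seg p q) (seg u v) = max (dist p u) (dist q v) := by
  set M := max (dist p u) (dist q v) with hM
  set S := { r : ℝ | ∃ f : ℝ → ℝ, ContinuousOn f (Set.Icc 0 1) ∧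
    MonotoneOn f (Set.Icc 0 1) ∧ Set.InjOn f (Set.Icc 0 1) ∧
    Set.MapsTo f (Set.Icc 0 1) (Set.Icc 0 1) ∧ f 0 = 0 ∧ f 1 = 1 ∧
    r = ⨆ t : Set.Icc (0 : ℝ) 1, dist (seg p q (f (t : ℝ))) (seg u v (t : ℝ)) } with hS
  have hlow : ∀ r ∈ S, M ≤ r := by
    rintro r ⟨f, _, _, _, hmaps, hf0, hf1, rfl⟩
    have hbdd : BddAbove (Set.range fun t : Set.Icc (0:ℝ) 1 =>
        dist (seg p q (f (t : ℝ))) (seg u v (t : ℝ))) := by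
      refine ⟨‖p‖ + ‖q‖ + (‖u‖ + ‖v‖), ?_⟩
      rintro x ⟨t, rfl⟩
      calc dist (seg p q (f (t : ℝ))) (seg u v (t : ℝ))
          ≤ ‖seg p q (f (t : ℝ))‖ + ‖seg u v (t : ℝ)‖ := by
            rw [dist_eq_norm]; exact norm_sub_le _ _
        _ ≤ ‖p‖ + ‖q‖ + (‖u‖ + ‖v‖) := by
            gcongr
            · exact norm_seg_le p q (hmaps t.2)
            · exact norm_seg_le u v t.2
    have h0 : dist p u ≤ ⨆ t : Set.Icc (0:ℝ) 1,
        dist (seg p q (f (t : ℝ))) (seg u v (t : ℝ)) := by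
      have := le_ciSup hbdd (⟨0, by norm_num⟩ : Set.Icc (0:ℝ) 1)
      simpa [hf0, seg_zero] using this
    have h1 : dist q v ≤ ⨆ t : Set.Icc (0:ℝ) 1,
        dist (seg p q (f (t : ℝ))) (seg u v (t : ℝ)) := by
      have := le_ciSup hbdd (⟨1, by norm_num⟩ : Set.Icc (0:ℝ) 1)
      simpa [hf1, seg_one] using this
    exact max_le h0 h1
  have hmem : M ∈ S := by
    refine ⟨id, continuousOn_id, monotoneOn_id, Set.injOn_id _, Set.mapsTo_id _, rfl, rfl, ?_⟩
    have hbdd : BddAbove (Set.range fun t : Set.Icc (0:ℝ) 1 =>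
        dist (seg p q (t : ℝ)) (seg u v (t : ℝ))) := by
      refine ⟨M, ?_⟩
      rintro x ⟨t, rfl⟩
      exact dist_seg_le p q u v t.2
    refine le_antisymm ?_ (ciSup_le fun t => dist_seg_le p q u v t.2)
    refine max_le ?_ ?_
    · have := le_ciSup hbdd (⟨0, by norm_num⟩ : Set.Icc (0:ℝ) 1)
      simpa [seg_zero] using this
    · have := le_ciSup hbdd (⟨1, by norm_num⟩ : Set.Icc (0:ℝ) 1)
      simpa [seg_one] using this
  have : frechetDist (seg p q) (seg u v) = sInf S := rfl
  rw [this]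
  exact le_antisymm (csInf_le ⟨M, hlow⟩ hmem) (le_csInf ⟨M, hmem⟩ hlow)

end aux

/-- there is a finite nonempty set `T` of line segment curves in `ℝ²` such
that the segment connecting the centroid of the initial points to the centroid of the end
points is not optimal for the `(1,2)`-means objective under the Fréchet distance. -/
theorem centroid_segment_not_optimal_for_means :
    ∃ T : Finset (ℝ → EuclideanSpace ℝ (Fin 2)),
      T.Nonempty ∧
      (∀ σ ∈ T, ∃ p q : EuclideanSpace ℝ (Fin 2), σ = seg p q) ∧
      ∃ ν₀ ν₁ : EuclideanSpace ℝ (Fin 2),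
        ∑ τ ∈ T, frechetDist τ (seg ν₀ ν₁) ^ 2 <
          ∑ τ ∈ T, frechetDist τ
            (seg (centroid (T.image fun τ => τ 0))
                 (centroid (T.image fun τ => τ 1))) ^ 2 := by
  set e : EuclideanSpace ℝ (Fin 2) := EuclideanSpace.single 0 1 with he
  have hne : ‖e‖ = 1 := by rw [he, EuclideanSpace.norm_single]; norm_num
  have hdist : ∀ a b : ℝ, dist (a • e) (b • e) = |a - b| := by
    intro a b
    rw [dist_eq_norm, ← sub_smul, norm_smul, hne, mul_one, Real.norm_eq_abs]
  have hsmul_inj : ∀ a b : ℝ, a • e = b • e → a = b := by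
    intro a b h
    have : dist (a • e) (b • e) = 0 := by rw [h, dist_self]
    rw [hdist] at this
    have := abs_eq_zero.mp this
    linarith
  set τ₁ : ℝ → EuclideanSpace ℝ (Fin 2) := seg ((-1 : ℝ) • e) ((-1 : ℝ) • e) with hτ₁
  set τ₂ : ℝ → EuclideanSpace ℝ (Fin 2) := seg ((0 : ℝ) • e) ((1 : ℝ) • e) with hτ₂
  set τ₃ : ℝ → EuclideanSpace ℝ (Fin 2) := seg ((1 : ℝ) • e) ((0 : ℝ) • e) with hτ₃
  have hτ₁0 : τ₁ 0 = (-1 : ℝ) • e := seg_zero _ _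
  have hτ₂0 : τ₂ 0 = (0 : ℝ) • e := seg_zero _ _
  have hτ₃0 : τ₃ 0 = (1 : ℝ) • e := seg_zero _ _
  have hτ₁1 : τ₁ 1 = (-1 : ℝ) • e := seg_one _ _
  have hτ₂1 : τ₂ 1 = (1 : ℝ) • e := seg_one _ _
  have hτ₃1 : τ₃ 1 = (0 : ℝ) • e := seg_one _ _
  have h12 : τ₁ ≠ τ₂ := by
    intro h
    have := congrFun h 0
    rw [hτ₁0, hτ₂0] at this
    have := hsmul_inj _ _ this
    norm_num at this
  have h13 : τ₁ ≠ τ₃ := by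
    intro h
    have := congrFun h 0
    rw [hτ₁0, hτ₃0] at this
    have := hsmul_inj _ _ this
    norm_num at this
  have h23 : τ₂ ≠ τ₃ := by
    intro h
    have := congrFun h 0
    rw [hτ₂0, hτ₃0] at this
    have := hsmul_inj _ _ this
    norm_num at this
  refine ⟨{τ₁, τ₂, τ₃}, ?_, ?_, (1/3 : ℝ) • e, (1/3 : ℝ) • e, ?_⟩
  · exact ⟨τ₁, by simp⟩
  · intro σ hσ
    simp only [Finset.mem_insert, Finset.mem_singleton] at hσ
    rcases hσ with rfl | rfl | rfl
    · exact ⟨_, _, hτ₁⟩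
    · exact ⟨_, _, hτ₂⟩
    · exact ⟨_, _, hτ₃⟩
  · -- compute the images and centroids
    have hmm : ∀ a b : ℝ, a ≠ b → (a • e) ≠ (b • e) := fun a b hab h =>
      hab (hsmul_inj a b h)
    have hem1 : ((-1 : ℝ) • e) ≠ ((0 : ℝ) • e) := hmm _ _ (by norm_num)
    have hem2 : ((-1 : ℝ) • e) ≠ ((1 : ℝ) • e) := hmm _ _ (by norm_num)
    have hem3 : ((0 : ℝ) • e) ≠ ((1 : ℝ) • e) := hmm _ _ (by norm_num)
    have himg0 : (({τ₁, τ₂, τ₃} : Finset (ℝ → EuclideanSpace ℝ (Fin 2))).image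
        fun τ => τ 0) = {(-1 : ℝ) • e, (0 : ℝ) • e, (1 : ℝ) • e} := by
      rw [Finset.image_insert, Finset.image_insert, Finset.image_singleton,
        hτ₁0, hτ₂0, hτ₃0]
    have himg1 : (({τ₁, τ₂, τ₃} : Finset (ℝ → EuclideanSpace ℝ (Fin 2))).image
        fun τ => τ 1) = {(-1 : ℝ) • e, (1 : ℝ) • e, (0 : ℝ) • e} := by
      rw [Finset.image_insert, Finset.image_insert, Finset.image_singleton,
        hτ₁1, hτ₂1, hτ₃1]
    have hcent0 : centroid (({τ₁, τ₂, τ₃} : Finset (ℝ → EuclideanSpace ℝ (Fin 2))).image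
        fun τ => τ 0) = (0 : ℝ) • e := by
      rw [himg0, centroid]
      have nm1 : ((-1:ℝ) • e) ∉ ({(0:ℝ) • e, (1:ℝ) • e} : Finset _) := by
        simp only [Finset.mem_insert, Finset.mem_singleton]
        push_neg; exact ⟨hem1, hem2⟩
      have nm2 : ((0:ℝ) • e) ∉ ({(1:ℝ) • e} : Finset _) := by
        simp only [Finset.mem_singleton]; exact hem3
      rw [Finset.sum_insert nm1, Finset.sum_insert nm2, Finset.sum_singleton,
        Finset.card_insert_of_notMem nm1, Finset.card_insert_of_notMem nm2,
        Finset.card_singleton]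
      rw [← add_smul, ← add_smul]
      norm_num
    have hcent1 : centroid (({τ₁, τ₂, τ₃} : Finset (ℝ → EuclideanSpace ℝ (Fin 2))).image
        fun τ => τ 1) = (0 : ℝ) • e := by
      rw [himg1, centroid]
      have nm1 : ((-1:ℝ) • e) ∉ ({(1:ℝ) • e, (0:ℝ) • e} : Finset _) := by
        simp only [Finset.mem_insert, Finset.mem_singleton]
        push_neg; exact ⟨hem2, hem1⟩
      have nm2 : ((1:ℝ) • e) ∉ ({(0:ℝ) • e} : Finset _) := by
        simp only [Finset.mem_singleton]; exact fun h => hem3 h.symm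
      rw [Finset.sum_insert nm1, Finset.sum_insert nm2, Finset.sum_singleton,
        Finset.card_insert_of_notMem nm1, Finset.card_insert_of_notMem nm2,
        Finset.card_singleton]
      rw [← add_smul, ← add_smul]
      norm_num
    rw [hcent0, hcent1]
    rw [Finset.sum_insert (by simp [h12, h13]), Finset.sum_insert (by simp [h23]),
      Finset.sum_singleton, Finset.sum_insert (by simp [h12, h13]),
      Finset.sum_insert (by simp [h23]), Finset.sum_singleton]
    rw [hτ₁, hτ₂, hτ₃]
    rw [frechetDist_seg, frechetDist_seg, frechetDist_seg, frechetDist_seg,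
      frechetDist_seg, frechetDist_seg]
    simp only [hdist]
    norm_num [abs, max_def]
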